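/- arXiv:2501.05429 — 3 statements merged into one kernel-verified Lean document; each statement's English description precedes it below -/
import Mathlib

section
/- Let m ≥ 2 and n ≥ 1, and for each j = 1,…,m let x₁^j,…,xₙ^j ∈ ℝ³ be nonzero vectors. The following are equivalent: (i) there exist nonzero vectors a₁,…,a_m ∈ ℝ³ and flatland cameras A₁,…,A_m (real 2×3 matrices of rank 2) with Aⱼ·aⱼ = 0 for each j, such that for all i, j ∈ {1,…,m} and all k ∈ {1,…,n} one has Aᵢ·x_k^i ≠ 0 and Aᵢ·x_k^i ∼ Aⱼ·x_k^j; (ii) there exist nonzero vectors a₁,…,a_m ∈ ℝ³ and, for every ordered pair i ≠ j, a real 3×3 matrix F^{ij} of rank 2 with (F^{ij})ᵀ·aᵢ = 0 and F^{ij}·aⱼ = 0, such that for all such i, j and all k: (x_k^i)ᵀ·F^{ij}·x_k^j = 0, F^{ij}·x_k^j ≠ 0, and (F^{ij})ᵀ·x_k^i ≠ 0. -/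
/-!
Two flatland cameras `A`, `B` determine the fundamental matrix `F = Aᵀ J B`, where
`J = detForm` is the rotation by a right angle: `xᵀ F y = det (A x, B y)` vanishes exactly when
the images `A x` and `B y` are parallel, and the camera centres are the epipoles of `F`.
Conversely, fix a camera `A₀` whose kernel is spanned by the first centre. If `Fᵀ` kills that
centre then `Fᵀ` factors through `A₀`, so `F = A₀ᵀ J B` for some `B`, and the properties of `F`
say exactly that `B` is a camera centred at the right epipole whose images are parallel to those
of `A₀`.
-/

open Matrix

/-- `u ∼ v`: the vectors are equal up to a nonzero real scalar. -/
def Sim {k : ℕ} (u v : Fin k → ℝ) : Prop := ∃ c : ℝ, c ≠ 0 ∧ u = c • v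

namespace Sim

variable {k : ℕ} {u v w : Fin k → ℝ}

theorem refl (u : Fin k → ℝ) : Sim u u := ⟨1, one_ne_zero, (one_smul ℝ u).symm⟩

theorem symm (h : Sim u v) : Sim v u := by
  obtain ⟨c, hc, rfl⟩ := h
  exact ⟨c⁻¹, inv_ne_zero hc, (inv_smul_smul₀ hc v).symm⟩

theorem trans (h₁ : Sim u v) (h₂ : Sim v w) : Sim u w := by
  obtain ⟨c, hc, rfl⟩ := h₁
  obtain ⟨d, hd, rfl⟩ := h₂
  exact ⟨c * d, mul_ne_zero hc hd, (mul_smul c d w).symm⟩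

theorem ne_zero_iff (h : Sim u v) : u ≠ 0 ↔ v ≠ 0 := by
  obtain ⟨c, hc, rfl⟩ := h
  simp [hc]

end Sim

namespace Matrix

variable {K : Type*} [Field K] {m n p : Type*} [Fintype n] {A : Matrix m n K}

theorem vecMul_injective_of_rank_eq_card [Fintype m] (hA : A.rank = Fintype.card m) :
    Function.Injective A.vecMul := by
  rw [vecMul_injective_iff, linearIndependent_iff_card_eq_finrank_span, Set.finrank,
    ← rank_eq_finrank_span_row, hA]

theorem mulVec_surjective_of_rank_eq_card [Fintype m] (hA : A.rank = Fintype.card m) :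
    Function.Surjective A.mulVec := by
  have : LinearMap.range A.mulVecLin = ⊤ :=
    Submodule.eq_top_of_finrank_eq (by rw [← rank, hA, Module.finrank_fintype_fun_eq_card])
  exact LinearMap.range_eq_top.1 this

theorem exists_mul_eq_of_ker_le [Fintype m] (hA : Function.Surjective A.mulVec)
    {G : Matrix p n K} (h : LinearMap.ker A.mulVecLin ≤ LinearMap.ker G.mulVecLin) :
    ∃ H : Matrix p m K, H * A = G := by
  classical
  obtain ⟨s, hs⟩ := A.mulVecLin.exists_rightInverse_of_surjective (LinearMap.range_eq_top.2 hA)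
  refine ⟨LinearMap.toMatrix' (G.mulVecLin ∘ₗ s), mulVec_injective (funext fun v => ?_)⟩
  have hAs (w : m → K) : A *ᵥ s w = w := LinearMap.congr_fun hs w
  have hv : s (A *ᵥ v) - v ∈ LinearMap.ker A.mulVecLin := by
    rw [LinearMap.mem_ker, mulVecLin_apply, mulVec_sub, hAs, sub_self]
  have hGv := h hv
  rw [LinearMap.mem_ker, mulVecLin_apply, mulVec_sub, sub_eq_zero] at hGv
  rw [← mulVec_mulVec, LinearMap.toMatrix'_mulVec, LinearMap.comp_apply, mulVecLin_apply, hGv]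

theorem rank_mul_eq_right_of_mulVec_injective [Fintype p] {B : Matrix n p K}
    (hA : Function.Injective A.mulVec) : (A * B).rank = B.rank := by
  rw [rank, rank, mulVecLin_mul, LinearMap.range_comp,
    ← (Submodule.equivMapOfInjective A.mulVecLin hA _).finrank_eq]

end Matrix

theorem exists_matrix_rank_eq_ker_eq_span {K : Type*} [Field K] {k : ℕ} (a : Fin (k + 1) → K)
    (ha : a ≠ 0) :
    ∃ A : Matrix (Fin k) (Fin (k + 1)) K, A.rank = k ∧ LinearMap.ker A.mulVecLin = K ∙ a := by
  have hdim : Module.finrank K ((Fin (k + 1) → K) ⧸ K ∙ a) = Module.finrank K (Fin k → K) := by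
    have := Submodule.finrank_quotient_add_finrank (K ∙ a)
    rw [finrank_span_singleton ha] at this
    simp only [Module.finrank_fin_fun] at this ⊢
    omega
  let f := (LinearEquiv.ofFinrankEq _ _ hdim).toLinearMap ∘ₗ (K ∙ a).mkQ
  have hf : (LinearMap.toMatrix' f).mulVecLin = f := Matrix.toLin'_toMatrix' f
  refine ⟨LinearMap.toMatrix' f, ?_, ?_⟩
  · rw [rank, hf, LinearMap.range_comp, Submodule.range_mkQ, Submodule.map_top,
      LinearEquiv.range, finrank_top, Module.finrank_fin_fun]
  · rw [hf, LinearEquiv.ker_comp, Submodule.ker_mkQ]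

theorem mulVec_eq_zero_of_ker_eq_span {K : Type*} [Field K] {m n : Type*} [Fintype n]
    {A : Matrix m n K} {a : n → K} (hker : LinearMap.ker A.mulVecLin = K ∙ a) : A *ᵥ a = 0 := by
  rw [← mulVecLin_apply, ← LinearMap.mem_ker, hker]
  exact Submodule.mem_span_singleton_self a

def detForm : Matrix (Fin 2) (Fin 2) ℝ := !![0, 1; -1, 0]

theorem dotProduct_detForm_mulVec (u v : Fin 2 → ℝ) :
    u ⬝ᵥ detForm *ᵥ v = u 0 * v 1 - u 1 * v 0 := by
  simp only [dotProduct, mulVec, detForm, of_apply, cons_val', cons_val_fin_one, Fin.sum_univ_two,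
    cons_val_zero, cons_val_one]
  ring

theorem transpose_detForm : detFormᵀ = -detForm := by
  ext i j; fin_cases i <;> fin_cases j <;> simp [detForm]

theorem detForm_mul_detForm : detForm * detForm = -1 := by
  ext i j; fin_cases i <;> fin_cases j <;> simp [detForm]

theorem detForm_mulVec_injective : Function.Injective detForm.mulVec :=
  mulVec_injective_of_det_ne_zero (by simp [detForm, det_fin_two])

theorem dotProduct_detForm_mulVec_self (u : Fin 2 → ℝ) : u ⬝ᵥ detForm *ᵥ u = 0 := by
  rw [dotProduct_detForm_mulVec]; ring

theorem dotProduct_detForm_mulVec_eq_zero_iff {u v : Fin 2 → ℝ} (hu : u ≠ 0) (hv : v ≠ 0) :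
    u ⬝ᵥ detForm *ᵥ v = 0 ↔ Sim u v := by
  refine ⟨fun h => ?_, fun ⟨c, _, huv⟩ => by
    rw [huv, smul_dotProduct, dotProduct_detForm_mulVec_self, smul_zero]⟩
  rw [dotProduct_detForm_mulVec] at h
  have hvv : v ⬝ᵥ v ≠ 0 := fun h0 => hv (dotProduct_self_eq_zero.1 h0)
  have huv : u = (u ⬝ᵥ v / v ⬝ᵥ v) • v := by
    refine funext (Fin.forall_fin_two.2 ⟨?_, ?_⟩) <;>
      rw [Pi.smul_apply, smul_eq_mul, div_mul_eq_mul_div, eq_div_iff hvv] <;>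
      simp only [dotProduct, Fin.sum_univ_two]
    · linear_combination v 1 * h
    · linear_combination -v 0 * h
  refine ⟨u ⬝ᵥ v / v ⬝ᵥ v, fun h0 => hu ?_, huv⟩
  rw [huv, h0, zero_smul]

def fundamentalMatrix {d : Type*} (A B : Matrix (Fin 2) d ℝ) : Matrix d d ℝ := Aᵀ * detForm * B

section fundamentalMatrix

variable {d : Type*} {A B : Matrix (Fin 2) d ℝ}

theorem transpose_fundamentalMatrix : (fundamentalMatrix A B)ᵀ = -fundamentalMatrix B A := by
  simp [fundamentalMatrix, transpose_mul, transpose_detForm, Matrix.mul_assoc]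

variable [Fintype d]

theorem dotProduct_fundamentalMatrix_mulVec (x y : d → ℝ) :
    x ⬝ᵥ fundamentalMatrix A B *ᵥ y = (A *ᵥ x) ⬝ᵥ detForm *ᵥ (B *ᵥ y) := by
  rw [fundamentalMatrix, ← mulVec_mulVec, ← mulVec_mulVec, dotProduct_mulVec, vecMul_transpose]

theorem mulVec_transpose_mul_detForm_injective (hA : A.rank = 2) :
    Function.Injective (Aᵀ * detForm).mulVec := by
  have hAt : Function.Injective Aᵀ.mulVec := by
    rw [show Aᵀ.mulVec = fun v => v ᵥ* A from funext (mulVec_transpose A)]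
    exact vecMul_injective_of_rank_eq_card (by rw [hA, Fintype.card_fin])
  intro u v huv
  simp only [← mulVec_mulVec] at huv
  exact detForm_mulVec_injective (hAt huv)

theorem fundamentalMatrix_mulVec_eq_zero_iff (hA : A.rank = 2) (v : d → ℝ) :
    fundamentalMatrix A B *ᵥ v = 0 ↔ B *ᵥ v = 0 := by
  rw [fundamentalMatrix, ← mulVec_mulVec,
    (mulVec_transpose_mul_detForm_injective hA).eq_iff' (mulVec_zero _)]

theorem transpose_fundamentalMatrix_mulVec_eq_zero_iff (hB : B.rank = 2) (v : d → ℝ) :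
    (fundamentalMatrix A B)ᵀ *ᵥ v = 0 ↔ A *ᵥ v = 0 := by
  rw [transpose_fundamentalMatrix, neg_mulVec, neg_eq_zero,
    fundamentalMatrix_mulVec_eq_zero_iff hB]

theorem rank_fundamentalMatrix (hA : A.rank = 2) : (fundamentalMatrix A B).rank = B.rank :=
  rank_mul_eq_right_of_mulVec_injective (mulVec_transpose_mul_detForm_injective hA)

theorem exists_fundamentalMatrix_eq {a : d → ℝ} (hA : A.rank = 2)
    (hker : LinearMap.ker A.mulVecLin = ℝ ∙ a) {F : Matrix d d ℝ} (hF : Fᵀ *ᵥ a = 0) :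
    ∃ B, fundamentalMatrix A B = F := by
  obtain ⟨H, hH⟩ := exists_mul_eq_of_ker_le (mulVec_surjective_of_rank_eq_card
    (by rw [hA, Fintype.card_fin])) (G := Fᵀ) (by rwa [hker, Submodule.span_singleton_le_iff_mem])
  refine ⟨-(detForm * Hᵀ), ?_⟩
  rw [fundamentalMatrix, Matrix.mul_neg, ← Matrix.mul_assoc, Matrix.mul_assoc Aᵀ,
    detForm_mul_detForm, Matrix.mul_neg, Matrix.mul_one, Matrix.neg_mul, neg_neg, ← transpose_mul,
    hH, transpose_transpose]

end fundamentalMatrix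

def IsFundamentalMatrix {d ι : Type*} [Fintype d] (F : Matrix d d ℝ) (a b : d → ℝ)
    (x y : ι → d → ℝ) : Prop :=
  F.rank = 2 ∧ Fᵀ *ᵥ a = 0 ∧ F *ᵥ b = 0 ∧
    ∀ k, x k ⬝ᵥ F *ᵥ y k = 0 ∧ F *ᵥ y k ≠ 0 ∧ Fᵀ *ᵥ x k ≠ 0

theorem isFundamentalMatrix_fundamentalMatrix_iff {d ι : Type*} [Fintype d]
    {A B : Matrix (Fin 2) d ℝ} {a b : d → ℝ} {x y : ι → d → ℝ} (hA : A.rank = 2)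
    (ha : A *ᵥ a = 0) :
    IsFundamentalMatrix (fundamentalMatrix A B) a b x y ↔
      B.rank = 2 ∧ B *ᵥ b = 0 ∧
        ∀ k, A *ᵥ x k ≠ 0 ∧ B *ᵥ y k ≠ 0 ∧ Sim (A *ᵥ x k) (B *ᵥ y k) := by
  rw [IsFundamentalMatrix, rank_fundamentalMatrix hA]
  refine and_congr_right fun hB => ?_
  simp only [ne_eq, transpose_fundamentalMatrix_mulVec_eq_zero_iff hB, ha, true_and,
    fundamentalMatrix_mulVec_eq_zero_iff hA, dotProduct_fundamentalMatrix_mulVec]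
  refine and_congr_right fun _ => forall_congr' fun k => ?_
  constructor
  · rintro ⟨h, hy, hx⟩
    exact ⟨hx, hy, (dotProduct_detForm_mulVec_eq_zero_iff hx hy).1 h⟩
  · rintro ⟨hx, hy, h⟩
    exact ⟨(dotProduct_detForm_mulVec_eq_zero_iff hx hy).2 h, hy, hx⟩

theorem exists_camera_of_isFundamentalMatrix {d ι : Type*} [Fintype d]
    {A₀ : Matrix (Fin 2) d ℝ} {a₀ b : d → ℝ} {x y : ι → d → ℝ} {F : Matrix d d ℝ}
    (hA₀ : A₀.rank = 2) (hker : LinearMap.ker A₀.mulVecLin = ℝ ∙ a₀)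
    (hF : IsFundamentalMatrix F a₀ b x y) :
    ∃ B : Matrix (Fin 2) d ℝ, B.rank = 2 ∧ B *ᵥ b = 0 ∧
      ∀ k, A₀ *ᵥ x k ≠ 0 ∧ B *ᵥ y k ≠ 0 ∧ Sim (A₀ *ᵥ x k) (B *ᵥ y k) := by
  obtain ⟨B, rfl⟩ := exists_fundamentalMatrix_eq hA₀ hker hF.2.1
  exact ⟨B, (isFundamentalMatrix_fundamentalMatrix_iff hA₀
    (mulVec_eq_zero_of_ker_eq_span hker)).1 hF⟩

theorem common_image_iff_pairwise_fundamental_matrices_general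
    (m n : ℕ) (hm : 2 ≤ m)
    (x : Fin m → Fin n → Fin 3 → ℝ) :
    (∃ (a : Fin m → Fin 3 → ℝ) (A : Fin m → Matrix (Fin 2) (Fin 3) ℝ),
        (∀ j, a j ≠ 0 ∧ (A j).rank = 2 ∧ (A j).mulVec (a j) = 0) ∧
        (∀ i j k, (A i).mulVec (x i k) ≠ 0 ∧
          Sim ((A i).mulVec (x i k)) ((A j).mulVec (x j k))))
    ↔
    (∃ a : Fin m → Fin 3 → ℝ, (∀ j, a j ≠ 0) ∧
        ∀ i j, i ≠ j → ∃ F : Matrix (Fin 3) (Fin 3) ℝ,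
          F.rank = 2 ∧ Fᵀ.mulVec (a i) = 0 ∧ F.mulVec (a j) = 0 ∧
          ∀ k, (x i k) ⬝ᵥ F.mulVec (x j k) = 0 ∧
            F.mulVec (x j k) ≠ 0 ∧ Fᵀ.mulVec (x i k) ≠ 0) := by
  constructor
  · rintro ⟨a, A, hA, himage⟩
    refine ⟨a, fun j => (hA j).1, fun i j _ => ⟨fundamentalMatrix (A i) (A j), ?_⟩⟩
    exact (isFundamentalMatrix_fundamentalMatrix_iff (hA i).2.1 (hA i).2.2).2
      ⟨(hA j).2.1, (hA j).2.2, fun k => ⟨(himage i j k).1, (himage j i k).1, (himage i j k).2⟩⟩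
  · rintro ⟨a, ha, hF⟩
    let i₀ : Fin m := ⟨0, by omega⟩
    obtain ⟨A₀, hA₀, hker⟩ := exists_matrix_rank_eq_ker_eq_span (a i₀) (ha i₀)
    have hcam (j : Fin m) : ∃ B : Matrix (Fin 2) (Fin 3) ℝ, B.rank = 2 ∧ B *ᵥ a j = 0 ∧
        ∀ k, Sim (A₀ *ᵥ x i₀ k) (B *ᵥ x j k) := by
      by_cases hj : j = i₀
      · subst hj
        exact ⟨A₀, hA₀, mulVec_eq_zero_of_ker_eq_span hker, fun k => Sim.refl _⟩
      · obtain ⟨F, hF⟩ := hF i₀ j (Ne.symm hj)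
        obtain ⟨B, hB, hBa, hBx⟩ := exists_camera_of_isFundamentalMatrix hA₀ hker hF
        exact ⟨B, hB, hBa, fun k => (hBx k).2.2⟩
    -- a second view (`m ≥ 2`) is needed to see that the images under `A₀` are nonzero
    obtain ⟨F, hF₁⟩ := hF i₀ ⟨1, hm⟩ (by simp [i₀, Fin.ext_iff])
    obtain ⟨_, _, _, hA₀x⟩ := exists_camera_of_isFundamentalMatrix hA₀ hker hF₁
    choose A hA hAa hAx using hcam
    exact ⟨a, A, fun j => ⟨ha j, hA j, hAa j⟩, fun i j k =>
      ⟨(hAx i k).ne_zero_iff.1 (hA₀x k).1, (hAx i k).symm.trans (hAx j k)⟩⟩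

/-- Theorem 6: `m` labeled point sets admit flatland cameras producing a common
image iff pairwise compatible fundamental matrices exist. -/
theorem common_image_iff_pairwise_fundamental_matrices
    (m n : ℕ) (hm : 2 ≤ m) (hn : 1 ≤ n)
    (x : Fin m → Fin n → Fin 3 → ℝ)
    (hx : ∀ j k, x j k ≠ 0) :
    (∃ (a : Fin m → Fin 3 → ℝ) (A : Fin m → Matrix (Fin 2) (Fin 3) ℝ),
        (∀ j, a j ≠ 0 ∧ (A j).rank = 2 ∧ (A j).mulVec (a j) = 0) ∧
        (∀ i j k, (A i).mulVec (x i k) ≠ 0 ∧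
          Sim ((A i).mulVec (x i k)) ((A j).mulVec (x j k))))
    ↔
    (∃ a : Fin m → Fin 3 → ℝ, (∀ j, a j ≠ 0) ∧
        ∀ i j, i ≠ j → ∃ F : Matrix (Fin 3) (Fin 3) ℝ,
          F.rank = 2 ∧ Fᵀ.mulVec (a i) = 0 ∧ F.mulVec (a j) = 0 ∧
          ∀ k, (x i k) ⬝ᵥ F.mulVec (x j k) = 0 ∧
            F.mulVec (x j k) ≠ 0 ∧ Fᵀ.mulVec (x i k) ≠ 0) :=
  common_image_iff_pairwise_fundamental_matrices_general m n hm x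
end

section
/- Let a, x₅, y₅ ∈ ℝ³. Define c = (a₁(a₂−a₃), a₂(a₃−a₁), a₃(a₁−a₂)) ∈ ℝ³ and d = (a₁·y₅,₁·(a₂x₅,₃ − a₃x₅,₂), a₂·y₅,₂·(a₃x₅,₁ − a₁x₅,₃), a₃·y₅,₃·(a₁x₅,₂ − a₂x₅,₁)) ∈ ℝ³, set v = c × d and b = (v₂v₃, v₁v₃, v₁v₂) ∈ ℝ³, and set F = diag(a)·[a⊙b]_×·diag(b). Then the following polynomial identities hold: F·a = 0, Fᵀ·b = 0, eᵢᵀ·F·eᵢ = 0 for i = 1, 2, 3, e₄ᵀ·F·e₄ = 0, and y₅ᵀ·F·x₅ = 0. -/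
/-!
Write `F = diag(a) [w]ₓ diag(b)` with `w = a ⊙ b`. Then `yᵀ F x = (a ⊙ y) · (w × (b ⊙ x))`, so
`F a = 0` and `Fᵀ b = 0` because `w × w = 0`, and the diagonal of `F` vanishes with that of `[w]ₓ`.
When `b = (v₁v₂, v₀v₂, v₀v₁)` is the quadratic Cremona image of `v`, the bilinear form collapses to
`yᵀ F x = v₀v₁v₂ · (a ⊙ y ⊙ (a × x)) · v`. The vectors `c` and `d` of the statement are
`a ⊙ y ⊙ (a × x)` for `x = y = e₄` and for `(x, y) = (x₅, y₅)`, so `v = c × d` is orthogonal to both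
and the last two constraints hold.
-/

open Matrix

/-- The cross product on ℝ³. -/
def cross3 (u v : Fin 3 → ℝ) : Fin 3 → ℝ :=
  ![u 1 * v 2 - u 2 * v 1, u 2 * v 0 - u 0 * v 2, u 0 * v 1 - u 1 * v 0]

/-- The 3×3 skew-symmetric matrix `[v]ₓ` of the cross product: `[v]ₓ · u = v × u`. -/
def crossMat (v : Fin 3 → ℝ) : Matrix (Fin 3) (Fin 3) ℝ :=
  !![0, -v 2, v 1; v 2, 0, -v 0; -v 1, v 0, 0]

lemma cross3_self (u : Fin 3 → ℝ) : cross3 u u = 0 := by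
  funext i; fin_cases i <;> simp [cross3] <;> ring

lemma cross3_neg_left (u w : Fin 3 → ℝ) : cross3 (-u) w = -cross3 u w := by
  funext i; fin_cases i <;> simp [cross3] <;> ring

lemma dotProduct_cross3_self_left (u w : Fin 3 → ℝ) : u ⬝ᵥ cross3 u w = 0 := by
  simp [cross3, dotProduct, Fin.sum_univ_three]; ring

lemma dotProduct_cross3_self_right (u w : Fin 3 → ℝ) : w ⬝ᵥ cross3 u w = 0 := by
  simp [cross3, dotProduct, Fin.sum_univ_three]; ring

lemma crossMat_mulVec (w u : Fin 3 → ℝ) : crossMat w *ᵥ u = cross3 w u := by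
  funext i; fin_cases i <;> simp [crossMat, cross3, mulVec, dotProduct, Fin.sum_univ_three] <;> ring

lemma crossMat_transpose (w : Fin 3 → ℝ) : (crossMat w)ᵀ = crossMat (-w) := by
  ext i j; fin_cases i <;> fin_cases j <;> simp [crossMat]

lemma crossMat_apply_self (w : Fin 3 → ℝ) (i : Fin 3) : crossMat w i i = 0 := by
  fin_cases i <;> simp [crossMat]

lemma diagonal_mul_crossMat_mul_diagonal_mulVec (a w b x : Fin 3 → ℝ) :
    (diagonal a * crossMat w * diagonal b) *ᵥ x = a * cross3 w (b * x) := by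
  have hdiag : ∀ u z : Fin 3 → ℝ, diagonal u *ᵥ z = u * z := fun u z => funext (mulVec_diagonal u z)
  rw [← mulVec_mulVec, ← mulVec_mulVec, hdiag, crossMat_mulVec, hdiag]

lemma dotProduct_diagonal_mul_crossMat_mul_diagonal_mulVec (a w b x y : Fin 3 → ℝ) :
    y ⬝ᵥ (diagonal a * crossMat w * diagonal b) *ᵥ x = (a * y) ⬝ᵥ cross3 w (b * x) := by
  rw [diagonal_mul_crossMat_mul_diagonal_mulVec]
  simp only [dotProduct, Pi.mul_apply]
  exact Finset.sum_congr rfl fun i _ => by ring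

lemma diagonal_mul_crossMat_mul_diagonal_apply_self (a w b : Fin 3 → ℝ) (i : Fin 3) :
    (diagonal a * crossMat w * diagonal b) i i = 0 := by
  rw [mul_diagonal, diagonal_mul, crossMat_apply_self, mul_zero, zero_mul]

def quadraticCremona (v : Fin 3 → ℝ) : Fin 3 → ℝ :=
  ![v 1 * v 2, v 0 * v 2, v 0 * v 1]

-- With `b = quadraticCremona v`, each product `bⱼ bₖ` for `{i, j, k} = {0, 1, 2}` is `v₀v₁v₂ · vᵢ`.
lemma dotProduct_cross3_quadraticCremona (a x y v : Fin 3 → ℝ) :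
    (a * y) ⬝ᵥ cross3 (a * quadraticCremona v) (quadraticCremona v * x) =
      v 0 * v 1 * v 2 * ((a * y * cross3 a x) ⬝ᵥ v) := by
  simp [quadraticCremona, cross3, dotProduct, Fin.sum_univ_three]; ring

lemma mul_mul_cross3_eq (a x y : Fin 3 → ℝ) :
    a * y * cross3 a x =
      ![a 0 * y 0 * (a 1 * x 2 - a 2 * x 1),
        a 1 * y 1 * (a 2 * x 0 - a 0 * x 2),
        a 2 * y 2 * (a 0 * x 1 - a 1 * x 0)] := by
  funext i; fin_cases i <;> simp [cross3]

/-- Constructive content of Theorem 22 part (1) (n = 5, standard position):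
the second camera center `b` is an explicit polynomial map of the first
center `a` (a degree-5 Cremona transformation), and the pair `(a, b)` admits a
fundamental matrix satisfying all five incidence constraints. -/
theorem five_points_cremona_polynomial_identities (a x₅ y₅ : Fin 3 → ℝ) :
    let c : Fin 3 → ℝ :=
      ![a 0 * (a 1 - a 2), a 1 * (a 2 - a 0), a 2 * (a 0 - a 1)]
    let d : Fin 3 → ℝ :=
      ![a 0 * y₅ 0 * (a 1 * x₅ 2 - a 2 * x₅ 1),
        a 1 * y₅ 1 * (a 2 * x₅ 0 - a 0 * x₅ 2),
        a 2 * y₅ 2 * (a 0 * x₅ 1 - a 1 * x₅ 0)]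
    let v := cross3 c d
    let b : Fin 3 → ℝ := ![v 1 * v 2, v 0 * v 2, v 0 * v 1]
    let F : Matrix (Fin 3) (Fin 3) ℝ :=
      Matrix.diagonal a * crossMat (a * b) * Matrix.diagonal b
    F.mulVec a = 0 ∧ Fᵀ.mulVec b = 0 ∧
    (∀ i : Fin 3, Pi.single i (1 : ℝ) ⬝ᵥ F.mulVec (Pi.single i (1 : ℝ)) = 0) ∧
    (fun _ : Fin 3 => (1 : ℝ)) ⬝ᵥ F.mulVec (fun _ => (1 : ℝ)) = 0 ∧
    y₅ ⬝ᵥ F.mulVec x₅ = 0 := by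
  intro c d v b F
  have hb : b = quadraticCremona v := rfl
  have hc : a * (fun _ => 1) * cross3 a (fun _ => 1) = c := by
    rw [mul_mul_cross3_eq]; simp [c]
  have hd : a * y₅ * cross3 a x₅ = d := mul_mul_cross3_eq a x₅ y₅
  refine ⟨?_, ?_, fun i => ?_, ?_, ?_⟩
  · rw [diagonal_mul_crossMat_mul_diagonal_mulVec, mul_comm b a, cross3_self, mul_zero]
  · rw [transpose_mul, transpose_mul, diagonal_transpose, diagonal_transpose, crossMat_transpose,
      ← Matrix.mul_assoc, diagonal_mul_crossMat_mul_diagonal_mulVec, cross3_neg_left, cross3_self,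
      neg_zero, mul_zero]
  · rw [mulVec_single_one, single_one_dotProduct]
    exact diagonal_mul_crossMat_mul_diagonal_apply_self a (a * b) b i
  · rw [dotProduct_diagonal_mul_crossMat_mul_diagonal_mulVec, hb,
      dotProduct_cross3_quadraticCremona, hc, dotProduct_cross3_self_left, mul_zero]
  · rw [dotProduct_diagonal_mul_crossMat_mul_diagonal_mulVec, hb,
      dotProduct_cross3_quadraticCremona, hd, dotProduct_cross3_self_right, mul_zero]
end

section
/- Let x₁, x₂, x₃, a ∈ ℝ³ satisfy det[xᵢ xⱼ a] ≠ 0 for all 1 ≤ i < j ≤ 3, and let y₁, y₂, y₃, b ∈ ℝ³ satisfy det[yᵢ yⱼ b] ≠ 0 for all 1 ≤ i < j ≤ 3, where det[u v w] is the determinant of the 3×3 matrix with columns u, v, w. Then there exist flatland cameras A and B (real 2×3 matrices of rank 2) with A·a = 0 and B·b = 0 such that A·xᵢ ∼ B·yᵢ for i = 1, 2, 3. -/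
open Matrix

/-- Determinant of the 3×3 matrix with columns `u`, `v`, `w`. -/
def det3 (u v w : Fin 3 → ℝ) : ℝ := ((Matrix.of ![u, v, w])ᵀ).det

/-!
A camera with center `a` projects the plane from `a` onto a line, and the hypothesis on the
`xᵢ` says that their three images are distinct points of that line. Any three distinct points
of ℙ¹ can be moved to the standard frame `[1:0], [0:1], [1:1]`, so each side has a camera
sending its three points to this frame, and these two cameras have a common image. Concretely,
the rows `x₁ × a` and `a × x₀` kill `a` and send `x₀, x₁` to the axes; rescaling them puts
`x₂` on the diagonal.
-/

theorem Sim.symm_s16 {k : ℕ} {u v : Fin k → ℝ} (h : Sim u v) : Sim v u := by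
  obtain ⟨c, hc, rfl⟩ := h
  exact ⟨c⁻¹, inv_ne_zero hc, by rw [smul_smul, inv_mul_cancel₀ hc, one_smul]⟩

theorem Sim.trans_s16 {k : ℕ} {u v w : Fin k → ℝ} (huv : Sim u v) (hvw : Sim v w) : Sim u w := by
  obtain ⟨c, hc, rfl⟩ := huv
  obtain ⟨d, hd, rfl⟩ := hvw
  exact ⟨c * d, mul_ne_zero hc hd, smul_smul c d w⟩

theorem det3_eq_dotProduct_cross (u v w : Fin 3 → ℝ) : det3 u v w = u ⬝ᵥ v ⨯₃ w := by
  rw [triple_product_eq_det, det3, det_transpose]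
  rfl

theorem det3_cyclic (u v w : Fin 3 → ℝ) : det3 u v w = det3 v w u := by
  simp only [det3_eq_dotProduct_cross, triple_product_permutation u]

theorem det3_swap (u v w : Fin 3 → ℝ) : det3 v u w = -det3 u v w := by
  rw [det3_cyclic v, det3_eq_dotProduct_cross, det3_eq_dotProduct_cross, ← dotProduct_neg,
    cross_anticomm]

theorem det3_self_left (u w : Fin 3 → ℝ) : det3 u u w = 0 := by
  rw [det3_eq_dotProduct_cross, dot_self_cross]

theorem det3_self_right (u v : Fin 3 → ℝ) : det3 u v u = 0 := by
  rw [det3_eq_dotProduct_cross, dot_cross_self]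

theorem cross_dotProduct (u v w : Fin 3 → ℝ) : v ⨯₃ w ⬝ᵥ u = det3 u v w := by
  rw [dotProduct_comm, det3_eq_dotProduct_cross]

theorem of_mulVec_two {n : Type*} [Fintype n] (p q v : n → ℝ) :
    of ![p, q] *ᵥ v = ![p ⬝ᵥ v, q ⬝ᵥ v] := by
  ext i
  fin_cases i <;> rfl

theorem rank_eq_two_of_sim {n : Type*} [Fintype n] (A : Matrix (Fin 2) n ℝ) {u v : n → ℝ}
    (hu : Sim (A *ᵥ u) ![1, 0]) (hv : Sim (A *ᵥ v) ![0, 1]) : A.rank = 2 := by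
  obtain ⟨c, hc, hu⟩ := hu
  obtain ⟨d, hd, hv⟩ := hv
  have hsurj : Function.Surjective A.mulVecLin := by
    intro w
    refine ⟨(w 0 / c) • u + (w 1 / d) • v, ?_⟩
    ext i
    fin_cases i <;> simp [mulVec_add, mulVec_smul, hu, hv, hc, hd]
  rw [rank, LinearMap.range_eq_top.2 hsurj, finrank_top, Module.finrank_fin_fun]

def lineFrame : Fin 3 → Fin 2 → ℝ := ![![1, 0], ![0, 1], ![1, 1]]

theorem exists_camera_sim_lineFrame (x : Fin 3 → Fin 3 → ℝ) (a : Fin 3 → ℝ)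
    (hx : ∀ i j, i < j → det3 (x i) (x j) a ≠ 0) :
    ∃ A : Matrix (Fin 2) (Fin 3) ℝ, A.rank = 2 ∧ A *ᵥ a = 0 ∧
      ∀ i, Sim (A *ᵥ x i) (lineFrame i) := by
  have h01 := hx 0 1 (by decide)
  have hα : det3 (x 2) (x 1) a ≠ 0 := by
    rw [det3_swap, neg_ne_zero]; exact hx 1 2 (by decide)
  have hβ : det3 (x 2) a (x 0) ≠ 0 := by
    rw [← det3_cyclic]; exact hx 0 2 (by decide)
  set A := of ![(det3 (x 2) (x 1) a)⁻¹ • x 1 ⨯₃ a, (det3 (x 2) a (x 0))⁻¹ • a ⨯₃ x 0]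
  have hA : ∀ v, A *ᵥ v =
      ![(det3 (x 2) (x 1) a)⁻¹ * det3 v (x 1) a, (det3 (x 2) a (x 0))⁻¹ * det3 v a (x 0)] := by
    intro v
    rw [of_mulVec_two, smul_dotProduct, smul_dotProduct, cross_dotProduct, cross_dotProduct,
      smul_eq_mul, smul_eq_mul]
  have hA0 : Sim (A *ᵥ x 0) (lineFrame 0) :=
    ⟨(det3 (x 2) (x 1) a)⁻¹ * det3 (x 0) (x 1) a, mul_ne_zero (inv_ne_zero hα) h01, by
      ext j; fin_cases j <;> simp [hA, lineFrame, det3_self_right]⟩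
  have hA1 : Sim (A *ᵥ x 1) (lineFrame 1) :=
    ⟨(det3 (x 2) a (x 0))⁻¹ * det3 (x 1) a (x 0),
      mul_ne_zero (inv_ne_zero hβ) (det3_cyclic (x 0) (x 1) a ▸ h01), by
      ext j; fin_cases j <;> simp [hA, lineFrame, det3_self_left]⟩
  have hA2 : Sim (A *ᵥ x 2) (lineFrame 2) :=
    ⟨1, one_ne_zero, by ext j; fin_cases j <;> simp [hA, lineFrame, hα, hβ]⟩
  refine ⟨A, rank_eq_two_of_sim A hA0 hA1, ?_, ?_⟩
  · ext j; fin_cases j <;> simp [hA, det3_self_left, det3_self_right]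
  · intro i; fin_cases i
    exacts [hA0, hA1, hA2]

/-- The n < 4 case of the Loci Theorem: for three labeled point pairs in
general position with respect to the chosen centers `a`, `b`, a common image
always exists. -/
theorem three_points_common_image_always_exists
    (x y : Fin 3 → Fin 3 → ℝ) (a b : Fin 3 → ℝ)
    (hx : ∀ i j, i < j → det3 (x i) (x j) a ≠ 0)
    (hy : ∀ i j, i < j → det3 (y i) (y j) b ≠ 0) :
    ∃ A B : Matrix (Fin 2) (Fin 3) ℝ, A.rank = 2 ∧ B.rank = 2 ∧
      A.mulVec a = 0 ∧ B.mulVec b = 0 ∧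
      ∀ i, Sim (A.mulVec (x i)) (B.mulVec (y i)) := by
  obtain ⟨A, hA, hAa, hAx⟩ := exists_camera_sim_lineFrame x a hx
  obtain ⟨B, hB, hBb, hBy⟩ := exists_camera_sim_lineFrame y b hy
  exact ⟨A, B, hA, hB, hAa, hBb, fun i => (hAx i).trans_s16 (hBy i).symm_s16⟩
end
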